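/- arXiv:2102.10381 — 3 statements merged into one kernel-verified Lean document; each statement's English description precedes it below -/
import Mathlib

section
/- For every bounded set H ⊂ R^{N+1} there exists a positive constant c_H such that ‖(x,t) ∘ (ξ,τ)‖_K ≤ c_H (‖(x,t)‖_K + ‖(ξ,τ)‖_K) for all (x,t), (ξ,τ) ∈ H, where ∘ is the Kolmogorov group law. -/
/-!
Writing `m = lvl i - lvl j`, the level condition on `B` forces `(B ^ n) i j = 0` for `n < m`, so
the exponential series gives `|exp (-τ B) i j| ≤ C |τ| ^ m` uniformly for bounded `τ`. With
`s = ‖z‖_K + ‖ζ‖_K` we have `|τ| ≤ s ^ 2` and `|x_j| ≤ s ^ α_j`, so the `j`-th term of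
`(E(τ) x)_i` is at most `C s ^ (2 m + α_j)`, and `2 m + α_j ≥ α_i`; the surplus power of `s` is
bounded because `s` is bounded on `H`.
-/

open NormedSpace

/-- The Kolmogorov group law `(x,t) ∘ (ξ,τ) = (ξ + E(τ)x, t + τ)` with `E(t) = exp(-tB)`. -/
noncomputable def KolOp {N : ℕ} (B : Matrix (Fin N) (Fin N) ℝ)
    (z ζ : (Fin N → ℝ) × ℝ) : (Fin N → ℝ) × ℝ :=
  (ζ.1 + (exp ((-ζ.2) • B)).mulVec z.1, z.2 + ζ.2)

/-- The homogeneous semi-norm `‖(x,t)‖_K = max{ |x_1|^{1/α_1}, …, |x_N|^{1/α_N}, |t|^{1/2} }`,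
where the exponents `α i = 2 * lvl i + 1` come from the block structure of `B`. -/
noncomputable def normK {N : ℕ} (α : Fin N → ℕ) (z : (Fin N → ℝ) × ℝ) : ℝ :=
  max (⨆ i : Fin N, |z.1 i| ^ ((α i : ℝ)⁻¹)) (|z.2| ^ ((2 : ℝ)⁻¹))

open Nat Finset

namespace Matrix

variable {ι : Type*} [Fintype ι] [DecidableEq ι]

theorem hasSum_exp_apply (A : Matrix ι ι ℝ) (i j : ι) :
    HasSum (fun n => (n ! : ℝ)⁻¹ * (A ^ n) i j) (exp A i j) := by
  -- any matrix norm will do: they all induce the product topology in which `exp` is defined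
  have := open scoped Norms.Operator in exp_series_hasSum_exp' (𝕂 := ℝ) A
  exact Pi.hasSum.1 (Pi.hasSum.1 this i) j

theorem exists_abs_pow_apply_le (A : Matrix ι ι ℝ) :
    ∃ K : ℝ, 1 ≤ K ∧ ∀ n i j, |(A ^ n) i j| ≤ K ^ n := by
  open scoped Norms.Elementwise in
  have hA : ∀ i j, |A i j| ≤ ‖A‖ := fun i j => norm_entry_le_entrywise_sup_norm A
  refine ⟨Fintype.card ι * ‖A‖ + 1, by simp only [le_add_iff_nonneg_left]; positivity, fun n => ?_⟩
  induction n with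
  | zero => intro i j; rw [pow_zero, pow_zero, one_apply]; split_ifs <;> simp
  | succ n ih =>
    intro i j
    calc |(A ^ (n + 1)) i j| ≤ ∑ k, |(A ^ n) i k| * |A k j| := by
          rw [pow_succ, mul_apply]; exact (abs_sum_le_sum_abs _ _).trans_eq (by simp only [abs_mul])
      _ ≤ ∑ _k : ι, (Fintype.card ι * ‖A‖ + 1) ^ n * ‖A‖ :=
          sum_le_sum fun k _ => mul_le_mul (ih i k) (hA k j) (abs_nonneg _) (by positivity)
      _ ≤ (Fintype.card ι * ‖A‖ + 1) ^ (n + 1) := by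
          rw [sum_const, Finset.card_univ, nsmul_eq_mul, pow_succ]
          nlinarith [pow_nonneg (show 0 ≤ (Fintype.card ι * ‖A‖ + 1) by positivity) n]

theorem pow_apply_eq_zero_of_lt (lvl : ι → ℕ) {A : Matrix ι ι ℝ}
    (hA : ∀ i j, lvl j + 1 < lvl i → A i j = 0) {n : ℕ} {i j : ι} (h : lvl j + n < lvl i) :
    (A ^ n) i j = 0 := by
  induction n generalizing j with
  | zero => exact one_apply_ne fun hij => by subst hij; omega
  | succ n ih =>
    rw [pow_succ, mul_apply]
    refine sum_eq_zero fun k _ => ?_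
    by_cases hk : lvl k + n < lvl i
    · rw [ih hk, zero_mul]
    · rw [hA k j (by omega), mul_zero]

theorem abs_exp_smul_apply_le {A : Matrix ι ι ℝ} {i j : ι} {K : ℝ} {m : ℕ}
    (hK : ∀ n, |(A ^ n) i j| ≤ K ^ n) (hm : ∀ n < m, (A ^ n) i j = 0) (τ : ℝ) :
    |exp (τ • A) i j| ≤ (|τ| * K) ^ m * Real.exp (1 + |τ| * K) := by
  have hK0 : 0 ≤ K := by simpa using (abs_nonneg _).trans (hK 1)
  set x := |τ| * K
  have hx : 0 ≤ x := by positivity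
  have hmajor : HasSum (fun n => x ^ m * ((1 + x) ^ n / n !)) (x ^ m * Real.exp (1 + x)) := by
    rw [Real.exp_eq_exp_ℝ]; exact (expSeries_div_hasSum_exp (1 + x)).mul_left _
  refine (hasSum_exp_apply (τ • A) i j).norm_le_of_bounded hmajor fun n => ?_
  rw [smul_pow, smul_apply, smul_eq_mul, Real.norm_eq_abs]
  obtain hn | hn := lt_or_ge n m
  · rw [hm n hn, mul_zero, mul_zero, abs_zero]; positivity
  have hpow : x ^ n ≤ x ^ m * (1 + x) ^ n := by
    rw [← pow_mul_pow_sub x hn]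
    gcongr
    calc x ^ (n - m) ≤ (1 + x) ^ (n - m) := by gcongr; linarith
      _ ≤ (1 + x) ^ n := pow_le_pow_right₀ (by linarith) (Nat.sub_le n m)
  calc |(n ! : ℝ)⁻¹ * (τ ^ n * (A ^ n) i j)| = (n ! : ℝ)⁻¹ * (|τ| ^ n * |(A ^ n) i j|) := by
        rw [abs_mul, abs_mul, abs_inv, abs_pow, Nat.abs_cast]
    _ ≤ (n ! : ℝ)⁻¹ * x ^ n := by
        rw [mul_pow]; gcongr; exact hK n
    _ ≤ x ^ m * ((1 + x) ^ n / n !) := by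
        rw [div_eq_inv_mul, mul_left_comm]; gcongr

theorem exists_abs_exp_smul_apply_le (lvl : ι → ℕ) {A : Matrix ι ι ℝ}
    (hA : ∀ i j, lvl j + 1 < lvl i → A i j = 0) (T : ℝ) :
    ∃ C, 0 ≤ C ∧ ∀ τ, |τ| ≤ T → ∀ i j, |exp (τ • A) i j| ≤ C * |τ| ^ (lvl i - lvl j) := by
  obtain ⟨K, hK1, hK⟩ := A.exists_abs_pow_apply_le
  obtain ⟨L, hL⟩ := Finite.exists_le lvl
  refine ⟨K ^ L * Real.exp (1 + T * K), by positivity, fun τ hτ i j => ?_⟩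
  calc |exp (τ • A) i j| ≤ (|τ| * K) ^ (lvl i - lvl j) * Real.exp (1 + |τ| * K) :=
        abs_exp_smul_apply_le (hK · i j) (fun n hn => pow_apply_eq_zero_of_lt lvl hA (by omega)) τ
    _ ≤ |τ| ^ (lvl i - lvl j) * K ^ L * Real.exp (1 + T * K) := by
        rw [mul_pow]
        gcongr
        have := hL i
        omega
    _ = K ^ L * Real.exp (1 + T * K) * |τ| ^ (lvl i - lvl j) := by ring

end Matrix

theorem abs_rpow_inv_le_iff {a s : ℝ} {n : ℕ} (hn : n ≠ 0) (hs : 0 ≤ s) :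
    |a| ^ (n : ℝ)⁻¹ ≤ s ↔ |a| ≤ s ^ n := by
  rw [Real.rpow_inv_le_iff_of_pos (abs_nonneg a) hs (by positivity), Real.rpow_natCast]

section normK

variable {N : ℕ} {α : Fin N → ℕ}

theorem normK_nonneg (z : (Fin N → ℝ) × ℝ) : 0 ≤ normK α z :=
  (Real.rpow_nonneg (abs_nonneg _) _).trans (le_max_right _ _)

theorem normK_le_iff (hα : ∀ i, α i ≠ 0) {z : (Fin N → ℝ) × ℝ} {s : ℝ} (hs : 0 ≤ s) :
    normK α z ≤ s ↔ (∀ i, |z.1 i| ≤ s ^ α i) ∧ |z.2| ≤ s ^ 2 := by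
  have hsup : (⨆ i, |z.1 i| ^ ((α i : ℝ)⁻¹)) ≤ s ↔ ∀ i, |z.1 i| ^ ((α i : ℝ)⁻¹) ≤ s :=
    ⟨fun h i => (le_ciSup (Finite.bddAbove_range _) i).trans h, fun h => Real.iSup_le h hs⟩
  rw [normK, max_le_iff, hsup, ← abs_rpow_inv_le_iff two_ne_zero hs, Nat.cast_ofNat]
  simp only [abs_rpow_inv_le_iff (hα _) hs]

theorem normK_le_mul_of_abs_le (hα : ∀ i, α i ≠ 0) {z : (Fin N → ℝ) × ℝ} {c s : ℝ}
    (hc : 1 ≤ c) (hs : 0 ≤ s) (hfst : ∀ i, |z.1 i| ≤ c * s ^ α i) (hsnd : |z.2| ≤ c * s ^ 2) :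
    normK α z ≤ c * s := by
  have hpow {k : ℕ} (hk : k ≠ 0) : c * s ^ k ≤ (c * s) ^ k := by
    rw [mul_pow]; gcongr; exact le_self_pow₀ hc hk
  exact (normK_le_iff hα (by positivity)).2
    ⟨fun i => (hfst i).trans (hpow (hα i)), hsnd.trans (hpow two_ne_zero)⟩

theorem exists_normK_le_of_isBounded (hα : ∀ i, α i ≠ 0) {H : Set ((Fin N → ℝ) × ℝ)}
    (hH : Bornology.IsBounded H) : ∃ R, 1 ≤ R ∧ ∀ z ∈ H, normK α z ≤ R := by
  obtain ⟨r, hr⟩ := isBounded_iff_forall_norm_le.1 hH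
  have hR1 : 1 ≤ max r 1 := le_max_right r 1
  refine ⟨max r 1, hR1, fun z hz => ?_⟩
  have hcoord {a : ℝ} (ha : ‖a‖ ≤ ‖z‖) {k : ℕ} (hk : k ≠ 0) : |a| ≤ max r 1 ^ k := by
    rw [← Real.norm_eq_abs]
    exact ha.trans ((hr z hz).trans (le_max_left r 1)) |>.trans (le_self_pow₀ hR1 hk)
  exact (normK_le_iff hα (by positivity)).2
    ⟨fun i => hcoord ((norm_le_pi_norm z.1 i).trans (norm_fst_le z)) (hα i),
      hcoord (norm_snd_le z) two_ne_zero⟩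

end normK

theorem normK_kolOp_le {N : ℕ} {lvl : Fin N → ℕ} {B : Matrix (Fin N) (Fin N) ℝ} {C S : ℝ}
    (hC : 0 ≤ C) (hS : 1 ≤ S) {z ζ : (Fin N → ℝ) × ℝ}
    (hzζ : normK (fun i => 2 * lvl i + 1) z + normK (fun i => 2 * lvl i + 1) ζ ≤ S)
    (hE : ∀ i j, |exp ((-ζ.2) • B) i j| ≤ C * |ζ.2| ^ (lvl i - lvl j)) :
    normK (fun i => 2 * lvl i + 1) (KolOp B z ζ) ≤ (1 + C * ∑ j, S ^ (2 * lvl j)) *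
      (normK (fun i => 2 * lvl i + 1) z + normK (fun i => 2 * lvl i + 1) ζ) := by
  set α : Fin N → ℕ := fun i => 2 * lvl i + 1
  have hα : ∀ i, α i ≠ 0 := fun i => succ_ne_zero _
  have hz0 := normK_nonneg (α := α) z
  have hζ0 := normK_nonneg (α := α) ζ
  set s := normK α z + normK α ζ
  have hs0 : 0 ≤ s := by positivity
  have hz := (normK_le_iff hα hs0).1 (le_add_of_nonneg_right hζ0)
  have hζ := (normK_le_iff hα hs0).1 (le_add_of_nonneg_left hz0)
  have hterm (i j : Fin N) :
      |exp ((-ζ.2) • B) i j * z.1 j| ≤ C * S ^ (2 * lvl j) * s ^ α i := by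
    have he : α i ≤ 2 * (lvl i - lvl j) + α j := by simp only [α]; omega
    calc |exp ((-ζ.2) • B) i j * z.1 j| ≤ C * (s ^ 2) ^ (lvl i - lvl j) * s ^ α j := by
          rw [abs_mul]
          gcongr
          · exact (hE i j).trans (by gcongr; exact hζ.2)
          · exact hz.1 j
      _ = C * (s ^ α i * s ^ (2 * (lvl i - lvl j) + α j - α i)) := by
          rw [pow_mul_pow_sub s he, ← pow_mul, mul_assoc, ← pow_add]
      _ ≤ C * (s ^ α i * S ^ (2 * lvl j)) := by
          gcongr
          exact (pow_le_pow_left₀ hs0 hzζ _).trans (pow_le_pow_right₀ hS (by simp only [α]; omega))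
      _ = C * S ^ (2 * lvl j) * s ^ α i := by ring
  have hc : 1 ≤ 1 + C * ∑ j, S ^ (2 * lvl j) := le_add_of_nonneg_right (by positivity)
  refine normK_le_mul_of_abs_le hα hc hs0 (fun i => ?_) ?_
  · calc |(KolOp B z ζ).1 i| = |ζ.1 i + ∑ j, exp ((-ζ.2) • B) i j * z.1 j| := rfl
      _ ≤ |ζ.1 i| + ∑ j, |exp ((-ζ.2) • B) i j * z.1 j| :=
          (abs_add_le _ _).trans (add_le_add_right (abs_sum_le_sum_abs _ _) _)
      _ ≤ s ^ α i + ∑ j, C * S ^ (2 * lvl j) * s ^ α i :=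
          add_le_add (hζ.1 i) (sum_le_sum fun j _ => hterm i j)
      _ = (1 + C * ∑ j, S ^ (2 * lvl j)) * s ^ α i := by rw [← sum_mul, ← mul_sum]; ring
  · calc |(KolOp B z ζ).2| ≤ |z.2| + |ζ.2| := abs_add_le _ _
      _ ≤ normK α z ^ 2 + normK α ζ ^ 2 :=
          add_le_add ((normK_le_iff hα hz0).1 le_rfl).2 ((normK_le_iff hα hζ0).1 le_rfl).2
      _ ≤ s ^ 2 := by nlinarith
      _ ≤ (1 + C * ∑ j, S ^ (2 * lvl j)) * s ^ 2 := le_mul_of_one_le_left (by positivity) hc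

/-- On every bounded set `H` there is `c_H > 0` with
`‖z ∘ ζ‖_K ≤ c_H (‖z‖_K + ‖ζ‖_K)` for all `z, ζ ∈ H`.  Here `B` has the block lower
Hessenberg form [H.1]: `B i j = 0` whenever the level of `i` exceeds the level of `j` plus one,
and the homogeneity exponents are `α i = 2 * lvl i + 1`. -/
theorem normK_op_pseudo_triangle {N : ℕ} (lvl : Fin N → ℕ)
    (B : Matrix (Fin N) (Fin N) ℝ) (hB : ∀ i j, lvl j + 1 < lvl i → B i j = 0)
    (H : Set ((Fin N → ℝ) × ℝ)) (hH : Bornology.IsBounded H) :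
    ∃ c : ℝ, 0 < c ∧ ∀ z ∈ H, ∀ ζ ∈ H,
      normK (fun i => 2 * lvl i + 1) (KolOp B z ζ) ≤
        c * (normK (fun i => 2 * lvl i + 1) z + normK (fun i => 2 * lvl i + 1) ζ) := by
  have hα : ∀ i, 2 * lvl i + 1 ≠ 0 := fun i => succ_ne_zero _
  obtain ⟨R, hR1, hRH⟩ := exists_normK_le_of_isBounded hα hH
  obtain ⟨C, hC0, hC⟩ := B.exists_abs_exp_smul_apply_le lvl hB (R ^ 2)
  refine ⟨1 + C * ∑ j, (2 * R) ^ (2 * lvl j), by positivity, fun z hz ζ hζ => ?_⟩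
  have hτ : |-ζ.2| ≤ R ^ 2 := by
    rw [abs_neg]; exact ((normK_le_iff hα (by linarith)).1 (hRH ζ hζ)).2
  refine normK_kolOp_le hC0 (by linarith) (by linarith [hRH z hz, hRH ζ hζ]) fun i j => ?_
  simpa only [abs_neg] using hC _ hτ i j
end

section
/- If the matrix B has the block lower-triangular form B_0 with only the subdiagonal blocks B_1,…,B_κ nonzero (all other blocks zero), then the dilations distribute over the group law: δ_r(z ∘ ζ) = (δ_r z) ∘ (δ_r ζ) for every z, ζ ∈ R^{N+1} and every r > 0. -/
open NormedSpace

/-- The dilation `δ_r = diag(r I_{m_0}, r³ I_{m_1}, …, r^{2κ+1} I_{m_κ}, r²)`, encoded via a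
level function `lvl`: the coordinate `i` (at level `lvl i`) is scaled by `r^{2 lvl i + 1}`. -/
def dil {N : ℕ} (lvl : Fin N → ℕ) (r : ℝ) (z : (Fin N → ℝ) × ℝ) : (Fin N → ℝ) × ℝ :=
  (fun i => r ^ (2 * lvl i + 1) * z.1 i, r ^ 2 * z.2)

/-!
Write `D = diag(r^{2 lvl i + 1})` for the spatial part of `δ_r`. Since `B` only
connects level `l` to level `l + 1`, and these are scaled by `r^{2l+1}` and `r^{2l+3}`, we get
`D B = r² B D`. This intertwining passes to the exponential series, so
`D exp(-τB) = exp(-r²τB) D`, which is exactly the spatial component of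
`δ_r(z ∘ ζ) = δ_r z ∘ δ_r ζ`; the time component is linear.
-/

namespace Matrix

variable {n : Type*} [Fintype n] [DecidableEq n]

theorem semiconjBy_exp {𝕜 : Type*} [RCLike 𝕜] {D A A' : Matrix n n 𝕜}
    (h : SemiconjBy D A A') : SemiconjBy D (exp A) (exp A') :=
  open scoped Norms.Operator in h.exp_right

theorem semiconjBy_diagonal_smul {R : Type*} [CommSemiring R] {d : n → R} {c : R}
    {B : Matrix n n R} (h : ∀ i j, B i j ≠ 0 → d i = c * d j) :
    SemiconjBy (diagonal d) B (c • B) := by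
  ext i j
  simp only [diagonal_mul, mul_diagonal, smul_apply, smul_eq_mul]
  by_cases hij : B i j = 0
  · simp [hij]
  · rw [h i j hij]
    ring

end Matrix

open Matrix

theorem dil_fst {N : ℕ} (lvl : Fin N → ℕ) (r : ℝ) (z : (Fin N → ℝ) × ℝ) :
    (dil lvl r z).1 = diagonal (fun i => r ^ (2 * lvl i + 1)) *ᵥ z.1 := by
  ext i
  simp [dil, mulVec_diagonal]

theorem semiconjBy_dil_smul {N : ℕ} (lvl : Fin N → ℕ)
    (B : Matrix (Fin N) (Fin N) ℝ) (hB : ∀ i j, lvl i ≠ lvl j + 1 → B i j = 0) (r : ℝ) :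
    SemiconjBy (diagonal fun i => r ^ (2 * lvl i + 1)) B (r ^ 2 • B) := by
  refine semiconjBy_diagonal_smul fun i j hij => ?_
  rw [not_imp_comm.mp (hB i j) hij]
  ring

theorem dil_distrib_over_op_general {N : ℕ} (lvl : Fin N → ℕ)
    (B : Matrix (Fin N) (Fin N) ℝ) (hB : ∀ i j, lvl i ≠ lvl j + 1 → B i j = 0)
    {r : ℝ} (z ζ : (Fin N → ℝ) × ℝ) :
    dil lvl r (KolOp B z ζ) = KolOp B (dil lvl r z) (dil lvl r ζ) := by
  set D : Matrix (Fin N) (Fin N) ℝ := diagonal fun i => r ^ (2 * lvl i + 1)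
  have hexp : D * exp ((-ζ.2) • B) = exp ((-(r ^ 2 * ζ.2)) • B) * D := by
    rw [mul_comm, ← neg_mul, ← smul_smul]
    exact semiconjBy_exp ((semiconjBy_dil_smul lvl B hB r).smul_right _)
  ext1
  · simp only [dil_fst, KolOp]
    rw [mulVec_add, mulVec_mulVec, hexp, ← mulVec_mulVec]
    rfl
  · simp only [KolOp, dil]
    ring

/-- If `B = B₀` has only the subdiagonal blocks nonzero (i.e. `B i j ≠ 0` forces
`lvl i = lvl j + 1`), then the dilations distribute over the group law:
`δ_r(z ∘ ζ) = (δ_r z) ∘ (δ_r ζ)` for all `z, ζ` and `r > 0`. -/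
theorem dil_distrib_over_op {N : ℕ} (lvl : Fin N → ℕ)
    (B : Matrix (Fin N) (Fin N) ℝ) (hB : ∀ i j, lvl i ≠ lvl j + 1 → B i j = 0)
    {r : ℝ} (hr : 0 < r) (z ζ : (Fin N → ℝ) × ℝ) :
    dil lvl r (KolOp B z ζ) = KolOp B (dil lvl r z) (dil lvl r ζ) :=
  dil_distrib_over_op_general lvl B hB z ζ
end

section
/- For the dilation-invariant matrix B_0, the exponential satisfies the scaling identity E(r^2 t) ∘ δ_r = δ_r ∘ E(t) on R^N for all r > 0 and t ∈ R; equivalently, exp(-r^2 t B_0) D_r = D_r exp(-t B_0), where D_r = diag(r I_{m_0}, r^3 I_{m_1}, …, r^{2κ+1} I_{m_κ}). -/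
/-!
The weight `r ^ (2 * lvl i + 1)` of level `k + 1` is `r ^ 2` times that of level `k`, so
conjugating the level-raising matrix `B` by `D_r` multiplies it by `r ^ 2`; the exponential,
a power series, inherits this intertwining: `D_r exp(-t B) = exp(-r² t B) D_r`.
-/

open NormedSpace

namespace Matrix

variable {m : Type*} [Fintype m] [DecidableEq m]

-- `exp` depends only on the topology of `Matrix m m 𝔸`, so any algebra norm inducing it may be used.
theorem semiconjBy_exp_s6 {𝔸 : Type*} [NormedRing 𝔸] [NormedAlgebra ℚ 𝔸] [CompleteSpace 𝔸]
    {X A B : Matrix m m 𝔸} (h : SemiconjBy X A B) : SemiconjBy X (exp A) (exp B) :=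
  @SemiconjBy.exp_right (Matrix m m 𝔸) Matrix.linftyOpNormedRing Matrix.linftyOpNormedAlgebra
    (inferInstanceAs (CompleteSpace (m → m → 𝔸))) X A B h

theorem diagonal_mul_eq_smul_mul_diagonal {R : Type*} [CommSemiring R] {w : m → R} {c : R}
    {B : Matrix m m R} (h : ∀ i j, B i j ≠ 0 → w i = c * w j) :
    diagonal w * B = c • (B * diagonal w) := by
  ext i j
  rw [diagonal_mul, smul_apply, mul_diagonal, smul_eq_mul]
  by_cases hij : B i j = 0
  · simp [hij]
  · rw [h i j hij]
    ring

end Matrix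

theorem exp_scaling_identity_general {N : ℕ} (lvl : Fin N → ℕ)
    (B : Matrix (Fin N) (Fin N) ℝ) (hB : ∀ i j, lvl i ≠ lvl j + 1 → B i j = 0)
    {r : ℝ} (t : ℝ) :
    exp ((-(r ^ 2 * t)) • B) * Matrix.diagonal (fun i => r ^ (2 * lvl i + 1)) =
      Matrix.diagonal (fun i => r ^ (2 * lvl i + 1)) * exp ((-t) • B) := by
  set D := Matrix.diagonal fun i => r ^ (2 * lvl i + 1)
  have hDB : D * B = r ^ 2 • (B * D) := by
    refine Matrix.diagonal_mul_eq_smul_mul_diagonal fun i j hij => ?_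
    rw [of_not_not (mt (hB i j) hij)]
    ring
  have hconj : SemiconjBy D ((-t) • B) ((-(r ^ 2 * t)) • B) := by
    rw [SemiconjBy, mul_smul_comm, hDB, smul_smul, smul_mul_assoc, neg_mul, mul_comm]
  exact (Matrix.semiconjBy_exp_s6 hconj).eq.symm

/-- For the dilation-invariant matrix `B₀` (only subdiagonal blocks nonzero, encoded by
`B i j ≠ 0 → lvl i = lvl j + 1`), the matrix exponential satisfies the scaling identity
`exp(-r²t B₀) D_r = D_r exp(-t B₀)`, where `D_r = diag(r I_{m_0}, r³ I_{m_1}, …)` is the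
spatial part of the dilation. -/
theorem exp_scaling_identity {N : ℕ} (lvl : Fin N → ℕ)
    (B : Matrix (Fin N) (Fin N) ℝ) (hB : ∀ i j, lvl i ≠ lvl j + 1 → B i j = 0)
    {r : ℝ} (hr : 0 < r) (t : ℝ) :
    exp ((-(r ^ 2 * t)) • B) * Matrix.diagonal (fun i => r ^ (2 * lvl i + 1)) =
      Matrix.diagonal (fun i => r ^ (2 * lvl i + 1)) * exp ((-t) • B) :=
  exp_scaling_identity_general lvl B hB t
end
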